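/- If G is a forest and e is an internal edge of G, then each of the leaf-contraction G⊙e and the dot-contraction (G⊙e) ∖ ℓ_e has exactly one fewer internal edge than G. -/

import Mathlib

open scoped Classical

namespace CSFPaper

noncomputable section

/-- Chromatic symmetric function: the coefficient of a monomial `d` is the number of
proper colorings `κ : V → ℕ` whose color-count vector is `d`. -/
def csf {V : Type*} [Fintype V] (G : SimpleGraph V) : MvPowerSeries ℕ ℚ :=
  fun d : ℕ →₀ ℕ =>
    (Nat.card {κ : V → ℕ //
      (∀ u w : V, G.Adj u w → κ u ≠ κ w) ∧
      ∀ i : ℕ, d i = Nat.card {v : V // κ v = i}} : ℚ)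

/-- The star graph on `k` vertices: vertex `0` is adjacent to all other vertices. -/
def starGraph (k : ℕ) : SimpleGraph (Fin k) where
  Adj a b := a ≠ b ∧ (a.val = 0 ∨ b.val = 0)
  symm := ⟨fun a b h => ⟨h.1.symm, h.2.symm⟩⟩
  loopless := ⟨fun a h => h.1 rfl⟩

/-- The star-basis element `st_λ`. -/
def stPart {n : ℕ} (p : Nat.Partition n) : MvPowerSeries ℕ ℚ :=
  (p.parts.map fun k => csf (starGraph k)).prod

/-- The parts of a multiset of naturals, in nonincreasing order. -/
def descSort (m : Multiset ℕ) : List ℕ := (m.sort (· ≤ ·)).reverse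

/-- Lexicographic (strict) order on partitions presented as multisets. -/
def msLexLT (a b : Multiset ℕ) : Prop := List.Lex (· < ·) (descSort a) (descSort b)

def msLexLE (a b : Multiset ℕ) : Prop := a = b ∨ msLexLT a b

/-- `p` is the leading partition of the expansion with coefficients `c`:
it has a nonzero coefficient and is lexicographically smallest such. -/
def IsLeading {n : ℕ} (c : Nat.Partition n → ℚ) (p : Nat.Partition n) : Prop :=
  c p ≠ 0 ∧ ∀ q : Nat.Partition n, c q ≠ 0 → msLexLE p.parts q.parts

variable {V : Type*}

/-- The set of internal edges: edges whose two endpoints both have degree at least 2. -/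
def internalEdges [Fintype V] (G : SimpleGraph V) : Set (Sym2 V) :=
  {e | e ∈ G.edgeSet ∧ ∀ v ∈ e, 2 ≤ G.degree v}

def numInternalEdges [Fintype V] (G : SimpleGraph V) : ℕ := Nat.card (internalEdges G)

/-- The graph obtained from `G` by deleting all internal edges. -/
def lcGraph [Fintype V] (G : SimpleGraph V) : SimpleGraph V := G.deleteEdges (internalEdges G)

/-- The multiset of orders of the connected components of `G`. -/
def compSizes [Fintype V] (G : SimpleGraph V) : Multiset ℕ :=
  ((Finset.univ : Finset V).image G.connectedComponentMk).val.map
    fun C => Nat.card C.supp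

/-- The leaf component partition `λ_LC(F) = λ(F \ I(F))` (as a multiset of component orders). -/
def lcMultiset [Fintype V] (G : SimpleGraph V) : Multiset ℕ := compSizes (lcGraph G)

/-- The order of the leaf component of `G` containing `x`. -/
def leafCompOrder [Fintype V] (G : SimpleGraph V) (x : V) : ℕ :=
  Nat.card ((lcGraph G).connectedComponentMk x).supp

/-- A deep vertex: an internal vertex all of whose neighbors are internal. -/
def IsDeep [Fintype V] (G : SimpleGraph V) (v : V) : Prop :=
  2 ≤ G.degree v ∧ ∀ u, G.Adj v u → 2 ≤ G.degree u

/-- Dot contraction of the edge `uv`, realized on the same vertex set: the edge is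
contracted onto `u`, and `v` becomes the new isolated vertex. -/
def dotContract (G : SimpleGraph V) (u v : V) : SimpleGraph V where
  Adj a b := a ≠ b ∧ a ≠ v ∧ b ≠ v ∧
    (G.Adj a b ∨ (a = u ∧ G.Adj v b) ∨ (b = u ∧ G.Adj a v))
  symm := by
    constructor
    rintro a b ⟨h1, h2, h3, h4⟩
    refine ⟨h1.symm, h3, h2, ?_⟩
    rcases h4 with h | ⟨rfl, h⟩ | ⟨rfl, h⟩
    · exact Or.inl h.symm
    · exact Or.inr (Or.inr ⟨rfl, h.symm⟩)
    · exact Or.inr (Or.inl ⟨rfl, h.symm⟩)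
  loopless := by constructor; rintro a ⟨h, -⟩; exact h rfl

/-- Leaf contraction of the edge `uv`, realized on the same vertex set: the edge is
contracted onto `u`, and `v` becomes the new pendant leaf `ℓ_e` attached to `u`. -/
def leafContract (G : SimpleGraph V) (u v : V) : SimpleGraph V where
  Adj a b := a ≠ b ∧ ((a = u ∧ b = v) ∨ (a = v ∧ b = u) ∨ (dotContract G u v).Adj a b)
  symm := by
    constructor
    rintro a b ⟨h1, h2⟩
    refine ⟨h1.symm, ?_⟩
    rcases h2 with ⟨rfl, rfl⟩ | ⟨rfl, rfl⟩ | h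
    · exact Or.inr (Or.inl ⟨rfl, rfl⟩)
    · exact Or.inl ⟨rfl, rfl⟩
    · exact Or.inr (Or.inr ((dotContract G u v).adj_symm h))
  loopless := by constructor; rintro a ⟨h, -⟩; exact h rfl

/-!
Contracting `uv` onto `u` acts on vertices by `contractMap u v` (which sends `v` to `u`) and sends
every other edge `xy` of `G` to `s(contractMap u v x, contractMap u v y)`. In a forest, indeed in
any triangle-free graph, `u` and `v` have no common neighbour, so this map is injective on the
other edges and changes no degree except those of `u` and `v`: the merged vertex `u` has degree
`deg u + deg v - 2 ≥ 2`, while `v` becomes isolated (dot-contraction) or the pendant leaf at `u`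
(leaf-contraction). Hence the internal edges of either contraction are exactly the images of the
internal edges of `G` other than `uv`.
-/

variable {G : SimpleGraph V} {u v : V}

lemma dotContract_adj {a b : V} : (dotContract G u v).Adj a b ↔
    a ≠ b ∧ a ≠ v ∧ b ≠ v ∧ (G.Adj a b ∨ (a = u ∧ G.Adj v b) ∨ (b = u ∧ G.Adj a v)) :=
  Iff.rfl

lemma leafContract_adj {a b : V} : (leafContract G u v).Adj a b ↔
    a ≠ b ∧ ((a = u ∧ b = v) ∨ (a = v ∧ b = u) ∨ (dotContract G u v).Adj a b) :=
  Iff.rfl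

lemma dotContract_le_leafContract : dotContract G u v ≤ leafContract G u v :=
  fun _ _ h => ⟨h.ne, Or.inr (Or.inr h)⟩

def contractMap (u v : V) (x : V) : V := if x = v then u else x

@[simp] lemma contractMap_right : contractMap u v v = u := if_pos rfl

@[simp] lemma contractMap_of_ne {x : V} (hx : x ≠ v) : contractMap u v x = x := if_neg hx

lemma contractMap_eq_contractMap_iff {x y : V} :
    contractMap u v x = contractMap u v y ↔ x = y ∨ s(x, y) = s(u, v) := by
  unfold contractMap
  split_ifs <;> aesop

lemma not_adj_of_adj_of_adj (hG : G.CliqueFree 3) (huv : G.Adj u v) {w : V} (huw : G.Adj u w) :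
    ¬ G.Adj v w := fun hvw => hG {u, v, w} (SimpleGraph.is3Clique_triple_iff.2 ⟨huv, huw, hvw⟩)

lemma edgeSet_dotContract (huv : u ≠ v) :
    (dotContract G u v).edgeSet = Sym2.map (contractMap u v) '' (G.edgeSet \ {s(u, v)}) := by
  ext ⟨a, b⟩
  simp only [SimpleGraph.mem_edgeSet, dotContract_adj, Set.mem_image, Set.mem_sdiff,
    Set.mem_singleton_iff]
  constructor
  · rintro ⟨hab, hav, hbv, h | ⟨rfl, h⟩ | ⟨rfl, h⟩⟩
    · exact ⟨s(a, b), ⟨h, by aesop⟩, by simp [hav, hbv]⟩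
    · exact ⟨s(v, b), ⟨h, by aesop⟩, by simp [hbv]⟩
    · exact ⟨s(a, v), ⟨h, by aesop⟩, by simp [hav]⟩
  · rintro ⟨⟨x, y⟩, ⟨hxy, hne⟩, h⟩
    simp only [SimpleGraph.mem_edgeSet, Sym2.map_mk, Sym2.eq_iff, contractMap] at hxy h
    split_ifs at h <;> grind [SimpleGraph.adj_comm, SimpleGraph.irrefl]

lemma injOn_map_contractMap (hG : G.CliqueFree 3) (huv : G.Adj u v) :
    Set.InjOn (Sym2.map (contractMap u v)) (G.edgeSet \ {s(u, v)}) := by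
  rintro ⟨a, b⟩ ⟨hab, hne⟩ ⟨c, d⟩ ⟨hcd, hne'⟩ h
  simp only [Sym2.map_mk, Sym2.eq_iff, contractMap_eq_contractMap_iff] at h
  simp only [SimpleGraph.mem_edgeSet, Set.mem_singleton_iff] at hab hcd hne hne'
  have hw : ∀ w, G.Adj w u → ¬ G.Adj w v := fun _ h => not_adj_of_adj_of_adj hG huv h.symm ∘ .symm
  rcases h with ⟨h1 | h1, h2 | h2⟩ | ⟨h1 | h1, h2 | h2⟩ <;> grind [SimpleGraph.adj_comm]

section

variable [Fintype V]

lemma mem_internalEdges_iff {H : SimpleGraph V} {a b : V} :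
    s(a, b) ∈ internalEdges H ↔ H.Adj a b ∧ 2 ≤ H.degree a ∧ 2 ≤ H.degree b := by
  simp [internalEdges]

lemma neighborFinset_dotContract_of_ne (huv : u ≠ v) {w : V} (hwu : w ≠ u) (hwv : w ≠ v) :
    (dotContract G u v).neighborFinset w = (G.neighborFinset w).image (contractMap u v) := by
  ext x
  simp only [SimpleGraph.mem_neighborFinset, Finset.mem_image, dotContract_adj, contractMap]
  grind [SimpleGraph.adj_comm, SimpleGraph.irrefl]

lemma degree_dotContract_of_ne (hG : G.CliqueFree 3) (huv : G.Adj u v) {w : V} (hwu : w ≠ u)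
    (hwv : w ≠ v) : (dotContract G u v).degree w = G.degree w := by
  rw [← SimpleGraph.card_neighborFinset_eq_degree, ← SimpleGraph.card_neighborFinset_eq_degree,
    neighborFinset_dotContract_of_ne huv.ne hwu hwv]
  refine Finset.card_image_of_injOn fun x hx y hy hxy => ?_
  simp only [Finset.mem_coe, SimpleGraph.mem_neighborFinset] at hx hy
  refine (contractMap_eq_contractMap_iff.1 hxy).resolve_right fun h => ?_
  rcases Sym2.eq_iff.1 h with ⟨rfl, rfl⟩ | ⟨rfl, rfl⟩
  · exact not_adj_of_adj_of_adj hG huv hx.symm hy.symm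
  · exact not_adj_of_adj_of_adj hG huv hy.symm hx.symm

lemma two_le_degree_dotContract_left (hG : G.CliqueFree 3) (huv : G.Adj u v)
    (hu : 2 ≤ G.degree u) (hv : 2 ≤ G.degree v) : 2 ≤ (dotContract G u v).degree u := by
  obtain ⟨a, ha, hav⟩ := Finset.exists_mem_ne hu v
  obtain ⟨b, hb, hbu⟩ := Finset.exists_mem_ne hv u
  rw [SimpleGraph.mem_neighborFinset] at ha hb
  have hab : a ≠ b := by rintro rfl; exact not_adj_of_adj_of_adj hG huv ha hb
  rw [← SimpleGraph.card_neighborFinset_eq_degree]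
  refine Finset.one_lt_card.2 ⟨a, ?_, b, ?_, hab⟩ <;> rw [SimpleGraph.mem_neighborFinset]
  · exact ⟨ha.ne, huv.ne, hav, Or.inl ha⟩
  · exact ⟨hbu.symm, huv.ne, hb.ne', Or.inr (Or.inl ⟨rfl, hb⟩)⟩

lemma two_le_degree_dotContract_contractMap_iff (hG : G.CliqueFree 3) (huv : G.Adj u v)
    (hu : 2 ≤ G.degree u) (hv : 2 ≤ G.degree v) (x : V) :
    2 ≤ (dotContract G u v).degree (contractMap u v x) ↔ 2 ≤ G.degree x := by
  have hu' := two_le_degree_dotContract_left hG huv hu hv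
  obtain rfl | hxv := eq_or_ne x v
  · rw [contractMap_right]; exact iff_of_true hu' hv
  obtain rfl | hxu := eq_or_ne x u
  · rw [contractMap_of_ne hxv]; exact iff_of_true hu' hu
  rw [contractMap_of_ne hxv, degree_dotContract_of_ne hG huv hxu hxv]

lemma internalEdges_dotContract (hG : G.CliqueFree 3) (huv : G.Adj u v)
    (hu : 2 ≤ G.degree u) (hv : 2 ≤ G.degree v) :
    internalEdges (dotContract G u v) =
      Sym2.map (contractMap u v) '' (internalEdges G \ {s(u, v)}) := by
  have hdeg := two_le_degree_dotContract_contractMap_iff hG huv hu hv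
  ext e
  simp only [internalEdges, Set.mem_ofPred_eq, edgeSet_dotContract huv.ne, Set.mem_image,
    Set.mem_sdiff, Set.mem_singleton_iff]
  constructor
  · rintro ⟨⟨e, ⟨he, hne⟩, rfl⟩, hint⟩
    exact ⟨e, ⟨⟨he, fun x hx => (hdeg x).1 (hint _ (Sym2.mem_map.2 ⟨x, hx, rfl⟩))⟩, hne⟩, rfl⟩
  · rintro ⟨e, ⟨⟨he, hint⟩, hne⟩, rfl⟩
    refine ⟨⟨e, ⟨he, hne⟩, rfl⟩, fun y hy => ?_⟩
    obtain ⟨x, hx, rfl⟩ := Sym2.mem_map.1 hy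
    exact (hdeg x).2 (hint x hx)

lemma neighborFinset_leafContract_of_ne {w : V} (hwu : w ≠ u) (hwv : w ≠ v) :
    (leafContract G u v).neighborFinset w = (dotContract G u v).neighborFinset w := by
  ext x
  simp only [SimpleGraph.mem_neighborFinset, leafContract_adj, hwu, hwv, false_and, false_or]
  exact ⟨And.right, fun h => ⟨h.ne, h⟩⟩

lemma degree_leafContract_right (huv : u ≠ v) : (leafContract G u v).degree v = 1 := by
  rw [← SimpleGraph.card_neighborFinset_eq_degree, Finset.card_eq_one]
  refine ⟨u, Finset.ext fun x => ?_⟩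
  simp only [SimpleGraph.mem_neighborFinset, leafContract_adj, dotContract_adj,
    Finset.mem_singleton]
  grind

lemma two_le_degree_leafContract_iff (hu : 2 ≤ (dotContract G u v).degree u) {w : V}
    (hwv : w ≠ v) : 2 ≤ (leafContract G u v).degree w ↔ 2 ≤ (dotContract G u v).degree w := by
  obtain rfl | hwu := eq_or_ne w u
  · exact iff_of_true (hu.trans (SimpleGraph.degree_le_of_le dotContract_le_leafContract)) hu
  · rw [← SimpleGraph.card_neighborFinset_eq_degree, ← SimpleGraph.card_neighborFinset_eq_degree,
      neighborFinset_leafContract_of_ne hwu hwv]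

lemma internalEdges_leafContract (huv : u ≠ v) (hu : 2 ≤ (dotContract G u v).degree u) :
    internalEdges (leafContract G u v) = internalEdges (dotContract G u v) := by
  ext ⟨a, b⟩
  simp only [mem_internalEdges_iff]
  constructor
  · rintro ⟨hab, ha, hb⟩
    have hav : a ≠ v := by rintro rfl; rw [degree_leafContract_right huv] at ha; omega
    have hbv : b ≠ v := by rintro rfl; rw [degree_leafContract_right huv] at hb; omega
    have hab' : (dotContract G u v).Adj a b := by
      rw [leafContract_adj] at hab
      grind
    exact ⟨hab', (two_le_degree_leafContract_iff hu hav).1 ha,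
      (two_le_degree_leafContract_iff hu hbv).1 hb⟩
  · rintro ⟨hab, ha, hb⟩
    obtain ⟨-, hav, hbv, -⟩ := dotContract_adj.1 hab
    exact ⟨dotContract_le_leafContract hab, (two_le_degree_leafContract_iff hu hav).2 ha,
      (two_le_degree_leafContract_iff hu hbv).2 hb⟩

end

/-- Leaf-contraction and dot-contraction of an internal edge of a
forest each produce a graph with exactly one fewer internal edge. -/
theorem contraction_removes_exactly_one_internal_edge
    {V : Type} [Fintype V] (G : SimpleGraph V) (hG : G.IsAcyclic)
    (u v : V) (he : s(u, v) ∈ internalEdges G) :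
    numInternalEdges (leafContract G u v) + 1 = numInternalEdges G ∧
      numInternalEdges (dotContract G u v) + 1 = numInternalEdges G := by
  have huv : G.Adj u v := he.1
  have hu : 2 ≤ G.degree u := he.2 u (Sym2.mem_mk_left u v)
  have hv : 2 ≤ G.degree v := he.2 v (Sym2.mem_mk_right u v)
  have hK₃ : G.CliqueFree 3 := hG.cliqueFree le_rfl
  have hdot := internalEdges_dotContract hK₃ huv hu hv
  have hleaf := internalEdges_leafContract huv.ne (two_le_degree_dotContract_left hK₃ huv hu hv)
  have hinj : Set.InjOn (Sym2.map (contractMap u v)) (internalEdges G \ {s(u, v)}) :=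
    (injOn_map_contractMap hK₃ huv).mono (Set.sdiff_subset_sdiff_left fun _ he => he.1)
  have hcount : (Sym2.map (contractMap u v) '' (internalEdges G \ {s(u, v)})).ncard + 1 =
      numInternalEdges G := by
    rw [hinj.ncard_image, Set.ncard_sdiff_singleton_add_one he, numInternalEdges,
      Nat.card_coe_set_eq]
  simp only [numInternalEdges, Nat.card_coe_set_eq, hleaf, hdot] at hcount ⊢
  exact ⟨hcount, hcount⟩

end

end CSFPaper
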